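/- arXiv:1908.04528 — 4 statements merged into one kernel-verified Lean document; each statement's English description precedes it below -/
import Mathlib

section
/- Suppose real coefficients a_1, a_2, b_1, b_2 are such that for all smooth vector fields X, Y on ℝ^m and all symmetric arrays K_j{}^i{}_k (symbols of a symmetric linear connection) at a point, the expression a_1·X^m·K_m{}^i{}_p·Y^p + a_2·X^i·K_m{}^m{}_p·Y^p + b_1·Y^m·K_m{}^i{}_p·X^p + b_2·Y^i·K_m{}^m{}_p·X^p vanishes identically. Then a_1 + b_1 = 0 and a_2 = b_2 = 0. -/
/-- Linear-algebraic core of the uniqueness of the Lie bracket: if the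
connection-dependent part of the operator vanishes for all vector values
`X`, `Y` and all symmetric connection symbols `K` (symmetric in the outer
lower indices), then `a₁ + b₁ = 0` and `a₂ = b₂ = 0`. -/
theorem stmt1 (m : ℕ) (hm : 2 ≤ m) (a₁ a₂ b₁ b₂ : ℝ)
    (h : ∀ (X Y : Fin m → ℝ) (K : Fin m → Fin m → Fin m → ℝ),
      (∀ j i k, K j i k = K k i j) →
      ∀ i, a₁ * (∑ n, ∑ p, X n * K n i p * Y p)
         + a₂ * X i * (∑ n, ∑ p, K n n p * Y p)
         + b₁ * (∑ n, ∑ p, Y n * K n i p * X p)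
         + b₂ * Y i * (∑ n, ∑ p, K n n p * X p) = 0) :
    a₁ + b₁ = 0 ∧ a₂ = 0 ∧ b₂ = 0 := by
  set i0 : Fin m := ⟨0, by omega⟩ with hi0
  set i1 : Fin m := ⟨1, by omega⟩ with hi1
  have hne : i1 ≠ i0 := by simp [hi0, hi1, Fin.ext_iff]
  set e0 : Fin m → ℝ := fun p => if p = i0 then 1 else 0 with he0
  set e1 : Fin m → ℝ := fun p => if p = i1 then 1 else 0 with he1
  set K0 : Fin m → Fin m → Fin m → ℝ :=
    fun j i k => (if j = i0 then 1 else 0) * (if i = i0 then 1 else 0) *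
      (if k = i0 then 1 else 0) with hK0
  set K1 : Fin m → Fin m → Fin m → ℝ :=
    fun j i k => (if j = i1 then 1 else 0) * (if i = i1 then 1 else 0) *
      (if k = i1 then 1 else 0) with hK1
  have hs0 : ∀ j i k, K0 j i k = K0 k i j := by
    intro j i k; simp only [hK0]; split_ifs <;> ring
  have hs1 : ∀ j i k, K1 j i k = K1 k i j := by
    intro j i k; simp only [hK1]; split_ifs <;> ring
  have h1 := h e0 e0 K0 hs0 i0
  have h2 := h e0 e1 K1 hs1 i0
  have h3 := h e1 e0 K1 hs1 i0
  simp only [he0, he1, hK0, hK1, ite_mul, mul_ite, mul_one, mul_zero, one_mul,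
    zero_mul, Finset.sum_ite_eq', Finset.mem_univ, if_true] at h1 h2 h3
  have hne' : i0 ≠ i1 := fun e => hne e.symm
  simp [hne, hne'] at h1 h2 h3
  refine ⟨by linarith, h2, h3⟩
end

section
/- On a smooth manifold M of dimension m ≥ 2, every first-order bilinear differential operator of the form Φ(X,Y)^i = a_1·X^m·∂_m Y^i + a_2·X^i·∂_m Y^m + b_1·Y^m·∂_m X^i + b_2·Y^i·∂_m X^m (in every coordinate chart, with fixed real constants a_1, a_2, b_1, b_2) that produces a well-defined vector field Φ(X,Y) for all vector fields X, Y is a constant multiple of the Lie bracket [X,Y]. -/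
open scoped BigOperators

noncomputable section

/-- Points of the model space `ℝ^m`. -/
abbrev Pt (m : ℕ) := Fin m → ℝ
/-- Vector fields (or 1-forms) on `ℝ^m`, given by their components. -/
abbrev VF (m : ℕ) := Pt m → Fin m → ℝ
/-- (0,2)-tensor fields (or (1,1)-tensor fields) on `ℝ^m`, given by components. -/
abbrev T02 (m : ℕ) := Pt m → Fin m → Fin m → ℝ
/-- (0,3)- or (1,2)-tensor fields on `ℝ^m`, given by components. -/
abbrev T3 (m : ℕ) := Pt m → Fin m → Fin m → Fin m → ℝ

variable {m : ℕ}

/-- `i`-th partial derivative of a scalar function. -/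
def pd (i : Fin m) (f : Pt m → ℝ) (x : Pt m) : ℝ :=
  fderiv ℝ f x (Pi.single i 1)

/-- Derivative of a function `f` along a vector field `X`. -/
def Xdot (X : VF m) (f : Pt m → ℝ) (x : Pt m) : ℝ :=
  ∑ k, X x k * pd k f x

/-- Lie bracket of vector fields, in components. -/
def lieB (X Y : VF m) : VF m := fun x i =>
  ∑ k, (X x k * pd k (fun y => Y y i) x - Y x k * pd k (fun y => X y i) x)

/-- Evaluation `ψ(X)` of a 1-form on a vector field. -/
def ev1 (ψ X : VF m) (x : Pt m) : ℝ := ∑ i, ψ x i * X x i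

/-- Exterior derivative of a function, as a 1-form. -/
def dF (f : Pt m → ℝ) : VF m := fun x i => pd i f x

/-- Exterior derivative of a 1-form, as a 2-form: `(dψ)_{ij} = ∂_i ψ_j - ∂_j ψ_i`. -/
def d2 (ψ : VF m) : T02 m := fun x i j =>
  pd i (fun y => ψ y j) x - pd j (fun y => ψ y i) x

/-- Evaluation of a (0,2)-tensor field on two vector fields. -/
def ev2 (T : T02 m) (X Y : VF m) (x : Pt m) : ℝ :=
  ∑ i, ∑ j, T x i j * X x i * Y x j

/-- Lie derivative of a 1-form `ψ` along `X`, evaluated on `Y`: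
`(L_X ψ)(Y) = X·(ψ(Y)) - ψ([X,Y])`. -/
def lie1 (X ψ Y : VF m) (x : Pt m) : ℝ :=
  Xdot X (ev1 ψ Y) x - ev1 ψ (lieB X Y) x

/-- Lie derivative of a (0,2)-tensor field `T` along `X`, evaluated on `Y, Z`:
`(L_X T)(Y,Z) = X·T(Y,Z) - T([X,Y],Z) - T(Y,[X,Z])`. -/
def lie2 (X : VF m) (T : T02 m) (Y Z : VF m) (x : Pt m) : ℝ :=
  Xdot X (ev2 T Y Z) x - ev2 T (lieB X Y) Z x - ev2 T Y (lieB X Z) x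

/-- Application of a (1,1)-tensor field to a vector field: `(φX)^i = φ^i_j X^j`. -/
def appT (φ : T02 m) (X : VF m) : VF m := fun x i => ∑ j, φ x i j * X x j

/-- `(ψ∘₁φ)(X,Y) = ψ(φX,Y)`, in components `(ψ∘₁φ)_{ij} = ψ_{aj} φ^a_i`. -/
def comp1 (ψ φ : T02 m) : T02 m := fun x i j => ∑ a, ψ x a j * φ x a i

/-- `(ψ∘₂φ)(X,Y) = ψ(X,φY)`, in components `(ψ∘₂φ)_{ij} = ψ_{ia} φ^a_j`. -/
def comp2 (ψ φ : T02 m) : T02 m := fun x i j => ∑ a, ψ x i a * φ x a j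

/-- Composition `ψ∘φ` of a 1-form with a (1,1)-tensor field:  `(ψ∘φ)_i = ψ_a φ^a_i`. -/
def compF (ψ : VF m) (φ : T02 m) : VF m := fun x i => ∑ a, ψ x a * φ x a i

/-- Exterior derivative of a 2-form `T`, as a 3-form:
`(dT)_{ijk} = ∂_i T_{jk} - ∂_j T_{ik} + ∂_k T_{ij}`. -/
def d3 (T : T02 m) : T3 m := fun x i j k =>
  pd i (fun y => T y j k) x - pd j (fun y => T y i k) x + pd k (fun y => T y i j) x

/-- Evaluation of a (0,3)-tensor field on three vector fields. -/
def ev3 (U : T3 m) (X Y Z : VF m) (x : Pt m) : ℝ :=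
  ∑ i, ∑ j, ∑ k, U x i j k * X x i * Y x j * Z x k

/-- Pointwise sum of vector fields. -/
def addV (X Y : VF m) : VF m := fun x i => X x i + Y x i

/-- Pointwise multiplication of a vector field by a function. -/
def smulV (f : Pt m → ℝ) (X : VF m) : VF m := fun x i => f x * X x i

/-- The coordinate expression of the candidate first-order bilinear operator
`Φ(X,Y)^i = a₁·X^k ∂_k Y^i + a₂·X^i ∂_k Y^k + b₁·Y^k ∂_k X^i + b₂·Y^i ∂_k X^k`. -/
def PhiV (a₁ a₂ b₁ b₂ : ℝ) (X Y : VF m) : VF m := fun x i =>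
  a₁ * (∑ k, X x k * pd k (fun y => Y y i) x)
  + a₂ * X x i * (∑ k, pd k (fun y => Y y k) x)
  + b₁ * (∑ k, Y x k * pd k (fun y => X y i) x)
  + b₂ * Y x i * (∑ k, pd k (fun y => X y k) x)

/-- Pushforward of a vector field by a diffeomorphism of `ℝ^m`. -/
def pfwdV (φ : Pt m ≃ Pt m) (X : VF m) : VF m := fun x =>
  fderiv ℝ (⇑φ) (φ.symm x) (X (φ.symm x))

/-!
Naturality under linear changes of coordinates says nothing: every such `Φ` is built from
contractions and is `GL(m)`-equivariant. The information comes from a nonlinear diffeomorphism,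
`sinh` applied to a single coordinate `xᵢ`. It pushes the constant fields `eᵢ` and `eⱼ` (`j ≠ i`)
forward to `S = √(1 + xᵢ²) eᵢ` and `eⱼ`, and `Φ` vanishes on pairs of constant fields, so
`Φ(S, S) = Φ(S, eⱼ) = Φ(eⱼ, S) = 0`. Their components `(a₁ + a₂ + b₁ + b₂) xᵢ`,
`b₂ xᵢ / √(1 + xᵢ²)` and `a₂ xᵢ / √(1 + xᵢ²)` then give `a₂ = b₂ = 0` and `b₁ = -a₁`,
that is `Φ = a₁ [X, Y]`.
-/

def sinhCoord (i : Fin m) : Pt m ≃ Pt m where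
  toFun x := Function.update x i (Real.sinh (x i))
  invFun x := Function.update x i (Real.arsinh (x i))
  left_inv x := by simp [Real.arsinh_sinh]
  right_inv x := by simp [Real.sinh_arsinh]

namespace sinhCoord

variable (i : Fin m)

lemma apply (x : Pt m) (k : Fin m) :
    sinhCoord i x k = if k = i then Real.sinh (x i) else x k := by
  simp [sinhCoord, Function.update_apply]

lemma symm_apply (x : Pt m) (k : Fin m) :
    (sinhCoord i).symm x k = if k = i then Real.arsinh (x i) else x k := by
  simp [sinhCoord, Function.update_apply]

lemma contDiff : ContDiff ℝ (⊤ : ℕ∞) (sinhCoord i) := by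
  refine contDiff_pi.mpr fun k => ?_
  simp only [apply]
  split_ifs
  · exact Real.contDiff_sinh.comp (contDiff_apply ℝ ℝ i)
  · exact contDiff_apply ℝ ℝ k

lemma contDiff_symm : ContDiff ℝ (⊤ : ℕ∞) (sinhCoord i).symm := by
  refine contDiff_pi.mpr fun k => ?_
  simp only [symm_apply]
  split_ifs
  · exact Real.contDiff_arsinh.comp (contDiff_apply ℝ ℝ i)
  · exact contDiff_apply ℝ ℝ k

lemma hasFDerivAt (y : Pt m) :
    HasFDerivAt (sinhCoord i) (ContinuousLinearMap.pi fun k =>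
      if k = i then Real.cosh (y i) • ContinuousLinearMap.proj (R := ℝ) (φ := fun _ : Fin m => ℝ) i
      else ContinuousLinearMap.proj k) y := by
  have h : ⇑(sinhCoord i) = fun x k => if k = i then Real.sinh (x i) else x k :=
    funext fun x => funext (apply i x)
  rw [h]
  refine hasFDerivAt_pi.2 fun k => ?_
  split_ifs with hk
  · subst hk
    exact (Real.hasDerivAt_sinh (y k)).comp_hasFDerivAt y (hasFDerivAt_apply (𝕜 := ℝ) k y)
  · exact hasFDerivAt_apply k y

lemma pfwdV_const (v : Pt m) :
    pfwdV (sinhCoord i) (fun _ => v) = fun x => Function.update v i (√(1 + x i ^ 2) * v i) := by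
  funext x k
  simp only [pfwdV, (hasFDerivAt i _).fderiv, ContinuousLinearMap.pi_apply, symm_apply,
    Function.update_apply]
  split_ifs
  · simp [Real.cosh_arsinh]
  · rfl

lemma pfwdV_single_self :
    pfwdV (sinhCoord i) (fun _ => Pi.single i 1) = fun x => Pi.single i √(1 + x i ^ 2) := by
  rw [pfwdV_const]
  funext x k
  by_cases hk : k = i <;> simp [hk]

lemma pfwdV_single_of_ne {j : Fin m} (hji : j ≠ i) :
    pfwdV (sinhCoord i) (fun _ => Pi.single j 1) = fun _ => Pi.single j 1 := by
  rw [pfwdV_const]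
  funext x k
  by_cases hk : k = i <;> simp [hk, hji.symm]

end sinhCoord

lemma pfwdV_zero (φ : Pt m ≃ Pt m) : pfwdV φ 0 = 0 := by
  funext x
  exact map_zero _

lemma hasDerivAt_sqrt_one_add_sq (t : ℝ) :
    HasDerivAt (fun s => √(1 + s ^ 2)) (t / √(1 + t ^ 2)) t := by
  have h := ((hasDerivAt_pow 2 t).const_add 1).sqrt (by positivity)
  convert h using 1
  field_simp
  ring

lemma pd_single_comp {i : Fin m} {g : ℝ → ℝ} {g' : ℝ} {x : Pt m} (hg : HasDerivAt g g' (x i))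
    (k l : Fin m) :
    pd k (fun y => (Pi.single i (g (y i)) : Pt m) l) x = if k = i ∧ l = i then g' else 0 := by
  by_cases hl : l = i
  · subst hl
    have hd : HasFDerivAt (fun y : Pt m => g (y l)) (g' • ContinuousLinearMap.proj l) x :=
      hg.comp_hasFDerivAt x (hasFDerivAt_apply (𝕜 := ℝ) l x)
    simp only [Pi.single_eq_same, pd, hd.fderiv]
    by_cases hk : k = l <;> simp [hk]
  · simp [hl, pd]

section PhiV

variable (a₁ a₂ b₁ b₂ : ℝ)

lemma PhiV_comm (X Y : VF m) : PhiV a₁ a₂ b₁ b₂ X Y = PhiV b₁ b₂ a₁ a₂ Y X := by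
  funext x i
  simp only [PhiV]
  ring

lemma PhiV_const (v w : Pt m) : PhiV a₁ a₂ b₁ b₂ (fun _ => v) (fun _ => w) = 0 := by
  funext x i
  simp [PhiV, pd]

lemma PhiV_eq_mul_lieB (X Y : VF m) (x : Pt m) (i : Fin m) :
    PhiV a₁ 0 (-a₁) 0 X Y x i = a₁ * lieB X Y x i := by
  simp only [PhiV, lieB, Finset.sum_sub_distrib]
  ring

lemma PhiV_single_single {i : Fin m} {g : ℝ → ℝ} {g' : ℝ} {x : Pt m}
    (hg : HasDerivAt g g' (x i)) :
    PhiV a₁ a₂ b₁ b₂ (fun y => Pi.single i (g (y i))) (fun y => Pi.single i (g (y i))) x i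
      = (a₁ + a₂ + b₁ + b₂) * (g (x i) * g') := by
  simp only [PhiV, pd_single_comp hg]
  simp only [and_true, and_self, mul_ite, mul_zero, Finset.sum_ite_eq', Finset.mem_univ,
    ↓reduceIte, Pi.single_eq_same]
  ring

lemma PhiV_single_const {i j : Fin m} (hji : j ≠ i) {g : ℝ → ℝ} {g' : ℝ} {x : Pt m}
    (hg : HasDerivAt g g' (x i)) :
    PhiV a₁ a₂ b₁ b₂ (fun y => Pi.single i (g (y i))) (fun _ => Pi.single j 1) x j = b₂ * g' := by
  simp only [PhiV, pd_single_comp hg]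
  simp [pd, hji]

end PhiV

def IsNaturalPhiV (m : ℕ) (a₁ a₂ b₁ b₂ : ℝ) : Prop :=
  ∀ φ : Pt m ≃ Pt m, ContDiff ℝ (⊤ : ℕ∞) φ → ContDiff ℝ (⊤ : ℕ∞) φ.symm →
    ∀ X Y : VF m, ContDiff ℝ (⊤ : ℕ∞) X → ContDiff ℝ (⊤ : ℕ∞) Y →
      PhiV a₁ a₂ b₁ b₂ (pfwdV φ X) (pfwdV φ Y) = pfwdV φ (PhiV a₁ a₂ b₁ b₂ X Y)

lemma IsNaturalPhiV.coeffs_eq {a₁ a₂ b₁ b₂ : ℝ} (hnat : IsNaturalPhiV m a₁ a₂ b₁ b₂)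
    {i j : Fin m} (hij : i ≠ j) : a₂ = 0 ∧ b₂ = 0 ∧ b₁ = -a₁ := by
  have hconst (v w : Pt m) :
      PhiV a₁ a₂ b₁ b₂ (pfwdV (sinhCoord i) fun _ => v) (pfwdV (sinhCoord i) fun _ => w) = 0 := by
    rw [hnat _ (sinhCoord.contDiff i) (sinhCoord.contDiff_symm i) _ _ contDiff_const
      contDiff_const, PhiV_const, pfwdV_zero]
  set p : Pt m := fun _ => 1
  have hg := hasDerivAt_sqrt_one_add_sq (p i)
  have hSS := congrFun (congrFun (hconst (Pi.single i 1) (Pi.single i 1)) p) i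
  rw [sinhCoord.pfwdV_single_self, PhiV_single_single _ _ _ _ hg] at hSS
  have hSE := congrFun (congrFun (hconst (Pi.single i 1) (Pi.single j 1)) p) j
  rw [sinhCoord.pfwdV_single_self, sinhCoord.pfwdV_single_of_ne i hij.symm,
    PhiV_single_const _ _ _ _ hij.symm hg] at hSE
  have hES := congrFun (congrFun (hconst (Pi.single j 1) (Pi.single i 1)) p) j
  rw [sinhCoord.pfwdV_single_self, sinhCoord.pfwdV_single_of_ne i hij.symm, PhiV_comm,
    PhiV_single_const _ _ _ _ hij.symm hg] at hES
  simp only [p] at hSS hSE hES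
  have hg' : 1 / √(1 + 1 ^ 2) ≠ 0 := by positivity
  have ha₂ : a₂ = 0 := (mul_eq_zero.1 hES).resolve_right hg'
  have hb₂ : b₂ = 0 := (mul_eq_zero.1 hSE).resolve_right hg'
  have hggp : √(1 + 1 ^ 2) * (1 / √(1 + 1 ^ 2)) = 1 := by
    field_simp
  rw [hggp, ha₂, hb₂] at hSS
  exact ⟨ha₂, hb₂, by simpa [add_eq_zero_iff_eq_neg'] using hSS⟩

/-- Theorem 2.1: every bilinear first-order operator of the given coordinate
form which is natural (equivariant under pushforward by all diffeomorphisms of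
`ℝ^m`, i.e. produces a well-defined vector field) is a constant multiple of
the Lie bracket. -/
theorem stmt2 (m : ℕ) (hm : 2 ≤ m) (a₁ a₂ b₁ b₂ : ℝ)
    (hnat : ∀ (φ : Pt m ≃ Pt m), ContDiff ℝ (⊤ : ℕ∞) (⇑φ) →
      ContDiff ℝ (⊤ : ℕ∞) (⇑φ.symm) →
      ∀ X Y : VF m, ContDiff ℝ (⊤ : ℕ∞) X → ContDiff ℝ (⊤ : ℕ∞) Y →
        PhiV a₁ a₂ b₁ b₂ (pfwdV φ X) (pfwdV φ Y)
          = pfwdV φ (PhiV a₁ a₂ b₁ b₂ X Y)) :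
    ∃ c : ℝ, ∀ X Y : VF m, ContDiff ℝ (⊤ : ℕ∞) X → ContDiff ℝ (⊤ : ℕ∞) Y →
      ∀ x i, PhiV a₁ a₂ b₁ b₂ X Y x i = c * lieB X Y x i := by
  have h01 : (⟨0, by omega⟩ : Fin m) ≠ ⟨1, by omega⟩ := by simp
  obtain ⟨rfl, rfl, rfl⟩ := IsNaturalPhiV.coeffs_eq hnat h01
  exact ⟨a₁, fun X Y _ _ => PhiV_eq_mul_lieB a₁ X Y⟩
end
end

section
/- Every natural ℝ-bilinear first-order differential operator transforming a vector field X and a 1-form ψ on a smooth manifold into a 1-form is a linear combination, with real coefficients, of the two operators d(ψ(X)) and i_X dψ. -/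
open scoped BigOperators

noncomputable section

variable {m : ℕ}

/-- The coordinate expression of the candidate first-order bilinear operator
`Φ_i = a₁·X^k ∂_k ψ_i + a₂·X^k ∂_i ψ_k + b₁·ψ_i ∂_k X^k + b₂·ψ_k ∂_i X^k`. -/
def PhiF (a₁ a₂ b₁ b₂ : ℝ) (X ψ : VF m) : VF m := fun x i =>
  a₁ * (∑ k, X x k * pd k (fun y => ψ y i) x)
  + a₂ * (∑ k, X x k * pd i (fun y => ψ y k) x)
  + b₁ * ψ x i * (∑ k, pd k (fun y => X y k) x)
  + b₂ * (∑ k, ψ x k * pd i (fun y => X y k) x)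

/-- Pushforward of a 1-form by a diffeomorphism of `ℝ^m`:
`(φ_*ψ)_i(x) = ψ_j(φ⁻¹x) ∂_i(φ⁻¹)^j(x)`. -/
def pfwd1 (φ : Pt m ≃ Pt m) (ψ : VF m) : VF m := fun x i =>
  ∑ j, ψ (φ.symm x) j * fderiv ℝ (⇑φ.symm) x (Pi.single i 1) j

/-!
Linear changes of coordinates impose no condition on `PhiF`; the constraints come from the
nonlinear diffeomorphism `expShear`, which replaces `xᵢ` by `xᵢ e^{xⱼ}`. Its Jacobian determinant
`e^{xⱼ}` is not constant, and this is what detects the divergence term `b₁`.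
`PhiF` vanishes on constant fields, so by naturality it also vanishes on pushforwards of constant
fields. The pushforward of `∂ⱼ` is `∂ⱼ + xᵢ ∂ᵢ`, that of `dxʲ` is `dxʲ`, and that of `dxⁱ` is
`e^{-xⱼ} (dxⁱ - xᵢ dxʲ)`; evaluating `PhiF` on these pairs at the origin gives `b₁ = 0` and
`b₂ = a₁ + a₂`. For these coefficients the product rule gives
`PhiF = (a₁ + a₂) d(ψ(X)) + a₁ i_X dψ`.
-/

section PartialDerivatives

variable {X ψ : VF m} {A B : Pt m →L[ℝ] Pt m} {x : Pt m}

@[simp]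
lemma fderiv_coord (j : Fin m) :
    fderiv ℝ (fun y : Pt m => y j) x = ContinuousLinearMap.proj j :=
  (hasFDerivAt_apply j x).fderiv

lemma pd_apply_of_hasFDerivAt (hX : HasFDerivAt X A x) (k l : Fin m) :
    pd k (fun y => X y l) x = A (Pi.single k 1) l := by
  rw [pd, fderiv_apply hX.differentiableAt, hX.fderiv]
  rfl

lemma PhiF_apply_of_hasFDerivAt (a₁ a₂ b₁ b₂ : ℝ) (hX : HasFDerivAt X A x)
    (hψ : HasFDerivAt ψ B x) (l : Fin m) :
    PhiF a₁ a₂ b₁ b₂ X ψ x l =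
      a₁ * (∑ k, X x k * B (Pi.single k 1) l) + a₂ * (∑ k, X x k * B (Pi.single l 1) k)
        + b₁ * ψ x l * (∑ k, A (Pi.single k 1) k)
        + b₂ * (∑ k, ψ x k * A (Pi.single l 1) k) := by
  simp only [PhiF, pd_apply_of_hasFDerivAt hX, pd_apply_of_hasFDerivAt hψ]

lemma PhiF_const (a₁ a₂ b₁ b₂ : ℝ) (u v : Pt m) :
    PhiF a₁ a₂ b₁ b₂ (fun _ => u) (fun _ => v) = 0 := by
  ext x l
  simp [PhiF_apply_of_hasFDerivAt a₁ a₂ b₁ b₂ (hasFDerivAt_const u x) (hasFDerivAt_const v x)]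

lemma pd_ev1 (hψ : DifferentiableAt ℝ ψ x) (hX : DifferentiableAt ℝ X x) (l : Fin m) :
    pd l (ev1 ψ X) x
      = ∑ k, (ψ x k * pd l (fun y => X y k) x + X x k * pd l (fun y => ψ y k) x) := by
  have hψk := differentiableAt_pi.1 hψ
  have hXk := differentiableAt_pi.1 hX
  simp only [pd]
  change fderiv ℝ (fun y => ∑ k, ψ y k * X y k) x _ = _
  rw [fderiv_fun_sum fun k _ => (hψk k).fun_mul (hXk k)]
  simp [fderiv_fun_mul (hψk _) (hXk _)]

lemma PhiF_zero_add_eq_dF_ev1_add_d2 (a₁ a₂ : ℝ) (hX : DifferentiableAt ℝ X x)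
    (hψ : DifferentiableAt ℝ ψ x) (l : Fin m) :
    PhiF a₁ a₂ 0 (a₁ + a₂) X ψ x l
      = (a₁ + a₂) * dF (ev1 ψ X) x l + a₁ * ∑ k, X x k * d2 ψ x k l := by
  simp only [PhiF, dF, d2, pd_ev1 hψ hX, mul_sub, Finset.sum_sub_distrib, Finset.sum_add_distrib]
  ring

end PartialDerivatives

section Pushforward

variable {φ : Pt m ≃ Pt m}

lemma pfwd1_zero : pfwd1 φ 0 = 0 := by
  ext x l
  simp [pfwd1]

lemma pfwdV_const (hφ : Differentiable ℝ φ) (u x : Pt m) (k : Fin m) :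
    pfwdV φ (fun _ => u) x k = fderiv ℝ (fun y => φ y k) (φ.symm x) u := by
  rw [pfwdV, fderiv_apply (hφ _)]
  rfl

lemma pfwd1_const_single (hφ : Differentiable ℝ φ.symm) (l : Fin m) :
    pfwd1 φ (fun _ => Pi.single l 1) = dF (fun y => φ.symm y l) := by
  ext x k
  simp [pfwd1, dF, pd, fderiv_apply (hφ x), Pi.single_apply]

end Pushforward

def IsNaturalPhiF (m : ℕ) (a₁ a₂ b₁ b₂ : ℝ) : Prop :=
  ∀ (φ : Pt m ≃ Pt m), ContDiff ℝ (⊤ : ℕ∞) (⇑φ) → ContDiff ℝ (⊤ : ℕ∞) (⇑φ.symm) →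
    ∀ X ψ : VF m, ContDiff ℝ (⊤ : ℕ∞) X → ContDiff ℝ (⊤ : ℕ∞) ψ →
      PhiF a₁ a₂ b₁ b₂ (pfwdV φ X) (pfwd1 φ ψ) = pfwd1 φ (PhiF a₁ a₂ b₁ b₂ X ψ)

lemma IsNaturalPhiF.PhiF_pfwd_const_eq_zero {a₁ a₂ b₁ b₂ : ℝ}
    (hnat : IsNaturalPhiF m a₁ a₂ b₁ b₂) {φ : Pt m ≃ Pt m} (hφ : ContDiff ℝ (⊤ : ℕ∞) φ)
    (hφ' : ContDiff ℝ (⊤ : ℕ∞) φ.symm) (u v : Pt m) :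
    PhiF a₁ a₂ b₁ b₂ (pfwdV φ fun _ => u) (pfwd1 φ fun _ => v) = 0 := by
  rw [hnat φ hφ hφ' _ _ contDiff_const contDiff_const, PhiF_const, pfwd1_zero]

section ExpShear

open Function

variable {i j : Fin m}

lemma contDiff_update_mul {n : WithTop ℕ∞} {g : Pt m → ℝ} (hg : ContDiff ℝ n g) (i : Fin m) :
    ContDiff ℝ n fun x : Pt m => update x i (x i * g x) := by
  refine contDiff_pi.2 fun k => ?_
  by_cases hk : k = i
  · subst hk
    simp only [update_self]
    fun_prop
  · simp only [update_of_ne hk]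
    fun_prop

def expShear (hij : i ≠ j) : Pt m ≃ Pt m where
  toFun x := update x i (x i * Real.exp (x j))
  invFun x := update x i (x i * Real.exp (-x j))
  left_inv x := by simp [update_of_ne hij.symm, mul_assoc, ← Real.exp_add]
  right_inv x := by simp [update_of_ne hij.symm, mul_assoc, ← Real.exp_add]

lemma contDiff_expShear (hij : i ≠ j) : ContDiff ℝ (⊤ : ℕ∞) (expShear hij) :=
  contDiff_update_mul (by fun_prop) i

lemma contDiff_expShear_symm (hij : i ≠ j) : ContDiff ℝ (⊤ : ℕ∞) (expShear hij).symm :=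
  contDiff_update_mul (by fun_prop) i

lemma pfwdV_expShear_single_right (hij : i ≠ j) :
    pfwdV (expShear hij) (fun _ => Pi.single j 1)
      = fun x => Pi.single j 1 + x i • Pi.single i 1 := by
  ext x k
  rw [pfwdV_const ((contDiff_expShear hij).differentiable (by simp))]
  by_cases hk : k = i
  · subst hk
    simp only [expShear, Equiv.coe_fn_mk, Equiv.coe_fn_symm_mk, update_self]
    rw [fderiv_fun_mul (by fun_prop) (by fun_prop), fderiv_exp (by fun_prop)]
    simp [hij.symm, mul_assoc, ← Real.exp_add]
  · simp only [expShear, Equiv.coe_fn_mk, Equiv.coe_fn_symm_mk, update_of_ne hk]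
    simp [hk]

lemma pfwd1_expShear_single_left (hij : i ≠ j) :
    pfwd1 (expShear hij) (fun _ => Pi.single i 1)
      = fun x => Real.exp (-x j) • (Pi.single i 1 - x i • Pi.single j 1) := by
  rw [pfwd1_const_single ((contDiff_expShear_symm hij).differentiable (by simp))]
  ext x k
  simp only [expShear, Equiv.coe_fn_symm_mk, update_self, dF, pd]
  rw [fderiv_fun_mul (by fun_prop) (by fun_prop), fderiv_exp (by fun_prop)]
  simp [fderiv_fun_neg, Pi.single_comm k]
  ring

lemma pfwd1_expShear_single_right (hij : i ≠ j) :
    pfwd1 (expShear hij) (fun _ => Pi.single j 1) = fun _ => Pi.single j 1 := by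
  rw [pfwd1_const_single ((contDiff_expShear_symm hij).differentiable (by simp))]
  ext x k
  simp [expShear, update_of_ne hij.symm, dF, pd, Pi.single_comm k]

lemma IsNaturalPhiF.b₁_eq_zero_and_b₂_eq_add {a₁ a₂ b₁ b₂ : ℝ}
    (hnat : IsNaturalPhiF m a₁ a₂ b₁ b₂) (hij : i ≠ j) : b₁ = 0 ∧ b₂ = a₁ + a₂ := by
  have hX := ((hasFDerivAt_apply (𝕜 := ℝ) i (0 : Pt m)).smul_const
    (Pi.single i 1 : Pt m)).const_add (Pi.single j 1 : Pt m)
  have hψ : HasFDerivAt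
      (fun x : Pt m => Real.exp (-x j) • (Pi.single i 1 - x i • Pi.single j 1 : Pt m)) _ 0 :=
    ((hasFDerivAt_apply (𝕜 := ℝ) j (0 : Pt m)).neg.exp).smul
      (((hasFDerivAt_apply (𝕜 := ℝ) i (0 : Pt m)).smul_const (Pi.single j 1 : Pt m)).const_sub
        (Pi.single i 1 : Pt m))
  have h := hnat.PhiF_pfwd_const_eq_zero (contDiff_expShear hij) (contDiff_expShear_symm hij)
    (Pi.single j 1)
  rw [pfwdV_expShear_single_right] at h
  have hb₁ := congrFun (congrFun (h (Pi.single j 1)) 0) j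
  have hb₂ := congrFun (congrFun (h (Pi.single i 1)) 0) i
  rw [pfwd1_expShear_single_right,
    PhiF_apply_of_hasFDerivAt _ _ _ _ hX (hasFDerivAt_const _ 0)] at hb₁
  rw [pfwd1_expShear_single_left, PhiF_apply_of_hasFDerivAt _ _ _ _ hX hψ] at hb₂
  simp [hij, hij.symm, Pi.single_apply] at hb₁ hb₂
  exact ⟨hb₁, by linarith⟩

end ExpShear

/-- Theorem 2.2: every natural ℝ-bilinear first-order operator transforming a
vector field `X` and a 1-form `ψ` into a 1-form (i.e. every operator of the
given coordinate form which is equivariant under all diffeomorphisms of `ℝ^m`)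
is a linear combination of `d(ψ(X))` and `i_X dψ`. -/
theorem stmt4 (m : ℕ) (hm : 2 ≤ m) (a₁ a₂ b₁ b₂ : ℝ)
    (hnat : ∀ (φ : Pt m ≃ Pt m), ContDiff ℝ (⊤ : ℕ∞) (⇑φ) →
      ContDiff ℝ (⊤ : ℕ∞) (⇑φ.symm) →
      ∀ X ψ : VF m, ContDiff ℝ (⊤ : ℕ∞) X → ContDiff ℝ (⊤ : ℕ∞) ψ →
        PhiF a₁ a₂ b₁ b₂ (pfwdV φ X) (pfwd1 φ ψ)
          = pfwd1 φ (PhiF a₁ a₂ b₁ b₂ X ψ)) :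
    ∃ c₁ c₂ : ℝ, ∀ X ψ : VF m, ContDiff ℝ (⊤ : ℕ∞) X → ContDiff ℝ (⊤ : ℕ∞) ψ →
      ∀ x i, PhiF a₁ a₂ b₁ b₂ X ψ x i
        = c₁ * dF (ev1 ψ X) x i + c₂ * (∑ k, X x k * d2 ψ x k i) := by
  obtain ⟨rfl, rfl⟩ : b₁ = 0 ∧ b₂ = a₁ + a₂ :=
    IsNaturalPhiF.b₁_eq_zero_and_b₂_eq_add (i := ⟨0, by omega⟩) (j := ⟨1, by omega⟩) hnat
      (by simp)
  exact ⟨a₁ + a₂, a₁, fun X ψ hX hψ x l =>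
    PhiF_zero_add_eq_dF_ev1_add_d2 a₁ a₂ (hX.differentiable (by simp) x)
      (hψ.differentiable (by simp) x) l⟩
end
end

section
/- Let φ be a (1,1)-tensor field and ψ a (0,2)-tensor field on a smooth manifold. Define Φ₁(φ,ψ)(X,Y,Z) := (L_{φ(X)}ψ − L_X(ψ∘₁φ))(Y,Z) − (L_{φ(Z)}ψ − L_Z(ψ∘₁φ))(Y,X) + (ψ∘₂φ)(Y,[X,Z]) − (ψ∘₁φ)(Y,[X,Z]), where (ψ∘₁φ)(X,Y) = ψ(φX,Y), (ψ∘₂φ)(X,Y) = ψ(X,φY), and L_X is the Lie derivative of (0,2)-tensor fields. Then Φ₁(φ,ψ) is a (0,3)-tensor field, i.e., C^∞(M)-linear in each of X, Y, Z. -/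
open scoped BigOperators

noncomputable section

variable {m : ℕ}

/-- The first operator of Theorem 3.4:
`Φ₁(φ,ψ)(X,Y,Z) = (L_{φ(X)}ψ − L_X(ψ∘₁φ))(Y,Z) − (L_{φ(Z)}ψ − L_Z(ψ∘₁φ))(Y,X)
  + (ψ∘₂φ)(Y,[X,Z]) − (ψ∘₁φ)(Y,[X,Z])`. -/
def Phi1 (φ ψ : T02 m) (X Y Z : VF m) (x : Pt m) : ℝ :=
  (lie2 (appT φ X) ψ Y Z x - lie2 X (comp1 ψ φ) Y Z x)
  - (lie2 (appT φ Z) ψ Y X x - lie2 Z (comp1 ψ φ) Y X x)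
  + ev2 (comp2 ψ φ) Y (lieB X Z) x - ev2 (comp1 ψ φ) Y (lieB X Z) x

/-! In coordinates, `Xdot V g x` is `Dg(x) (V x)` and `ev2 T Y Z x` is `Y x ⬝ᵥ T x *ᵥ Z x`.
The Lie derivative `(L_V T)(Y,Z)` is then tensorial in `Y` and `Z`, while
`L_{fV} T (Y,Z) = f L_V T (Y,Z) + (Y f) T(V,Z) + (Z f) T(Y,V)` and
`[fX,Z] = f[X,Z] - (Z f) X`. In `Φ₁` the resulting first-order terms in `f` cancel in pairs once
`(ψ∘₁φ)(A,B) = ψ(φA,B)` and `(ψ∘₂φ)(A,B) = ψ(A,φB)` are used, for `X` and for `Z` alike;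
in `Y` every term is already tensorial. -/

open Matrix

section

variable {x : Pt m}

lemma addV_apply (X Y : VF m) (x : Pt m) : addV X Y x = X x + Y x := rfl

lemma smulV_apply (f : Pt m → ℝ) (X : VF m) (x : Pt m) : smulV f X x = f x • X x := rfl

lemma appT_apply (φ : T02 m) (X : VF m) (x : Pt m) : appT φ X x = of (φ x) *ᵥ X x := rfl

lemma appT_addV (φ : T02 m) (X X' : VF m) :
    appT φ (addV X X') = addV (appT φ X) (appT φ X') := by
  funext y
  simp only [appT_apply, addV_apply, mulVec_add]

lemma appT_smulV (φ : T02 m) (f : Pt m → ℝ) (X : VF m) :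
    appT φ (smulV f X) = smulV f (appT φ X) := by
  funext y
  simp only [appT_apply, smulV_apply, mulVec_smul]

lemma differentiableAt_appT {φ : T02 m} {X : VF m} (hφ : DifferentiableAt ℝ φ x)
    (hX : DifferentiableAt ℝ X x) : DifferentiableAt ℝ (appT φ X) x := by
  unfold appT T02 VF at *
  fun_prop

lemma differentiableAt_comp1 {ψ φ : T02 m} (hψ : DifferentiableAt ℝ ψ x)
    (hφ : DifferentiableAt ℝ φ x) : DifferentiableAt ℝ (comp1 ψ φ) x := by
  unfold comp1 T02 at *
  fun_prop

lemma differentiableAt_ev2 {T : T02 m} {Y Z : VF m} (hT : DifferentiableAt ℝ T x)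
    (hY : DifferentiableAt ℝ Y x) (hZ : DifferentiableAt ℝ Z x) :
    DifferentiableAt ℝ (ev2 T Y Z) x := by
  unfold ev2 T02 VF at *
  fun_prop

lemma Xdot_eq_fderiv (V : VF m) (g : Pt m → ℝ) (x : Pt m) :
    Xdot V g x = fderiv ℝ g x (V x) := by
  conv_rhs => rw [pi_eq_sum_univ' (V x)]
  simp [Xdot, pd]

lemma Xdot_addV (V V' : VF m) (g : Pt m → ℝ) (x : Pt m) :
    Xdot (addV V V') g x = Xdot V g x + Xdot V' g x := by
  simp only [Xdot_eq_fderiv, addV_apply, map_add]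

lemma Xdot_smulV (f : Pt m → ℝ) (V : VF m) (g : Pt m → ℝ) (x : Pt m) :
    Xdot (smulV f V) g x = f x * Xdot V g x := by
  simp only [Xdot_eq_fderiv, smulV_apply, map_smul, smul_eq_mul]

lemma Xdot_add {g h : Pt m → ℝ} (hg : DifferentiableAt ℝ g x)
    (hh : DifferentiableAt ℝ h x) (V : VF m) :
    Xdot V (fun y => g y + h y) x = Xdot V g x + Xdot V h x := by
  simp only [Xdot_eq_fderiv, fderiv_fun_add hg hh, _root_.add_apply]

lemma Xdot_mul {g h : Pt m → ℝ} (hg : DifferentiableAt ℝ g x)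
    (hh : DifferentiableAt ℝ h x) (V : VF m) :
    Xdot V (fun y => g y * h y) x = Xdot V g x * h x + g x * Xdot V h x := by
  simp only [Xdot_eq_fderiv, fderiv_fun_mul hg hh, _root_.add_apply, _root_.smul_apply,
    smul_eq_mul]
  ring

lemma lieB_apply (X Y : VF m) (x : Pt m) (i : Fin m) :
    lieB X Y x i = Xdot X (fun y => Y y i) x - Xdot Y (fun y => X y i) x := by
  simp only [lieB, Xdot, Finset.sum_sub_distrib]

lemma lieB_swap (X Y : VF m) (x : Pt m) : lieB Y X x = -lieB X Y x := by
  ext i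
  simp only [lieB_apply, Pi.neg_apply, neg_sub]

lemma lieB_addV_left {X X' : VF m} (hX : DifferentiableAt ℝ X x)
    (hX' : DifferentiableAt ℝ X' x) (Y : VF m) :
    lieB (addV X X') Y x = lieB X Y x + lieB X' Y x := by
  ext i
  simp only [lieB_apply, Pi.add_apply, Xdot_addV, addV,
    Xdot_add (differentiableAt_pi.1 hX i) (differentiableAt_pi.1 hX' i)]
  ring

lemma lieB_smulV_left {f : Pt m → ℝ} {X : VF m} (hf : DifferentiableAt ℝ f x)
    (hX : DifferentiableAt ℝ X x) (Y : VF m) :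
    lieB (smulV f X) Y x = f x • lieB X Y x - Xdot Y f x • X x := by
  ext i
  simp only [lieB_apply, Pi.sub_apply, Pi.smul_apply, smul_eq_mul, Xdot_smulV, smulV,
    Xdot_mul hf (differentiableAt_pi.1 hX i)]
  ring

lemma lieB_addV_right (X : VF m) {Y Y' : VF m} (hY : DifferentiableAt ℝ Y x)
    (hY' : DifferentiableAt ℝ Y' x) :
    lieB X (addV Y Y') x = lieB X Y x + lieB X Y' x := by
  rw [lieB_swap, lieB_addV_left hY hY', lieB_swap X Y, lieB_swap X Y']
  abel

lemma lieB_smulV_right {f : Pt m → ℝ} (X : VF m) {Y : VF m} (hf : DifferentiableAt ℝ f x)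
    (hY : DifferentiableAt ℝ Y x) :
    lieB X (smulV f Y) x = f x • lieB X Y x + Xdot X f x • Y x := by
  rw [lieB_swap, lieB_smulV_left hf hY, lieB_swap X Y]
  module

lemma ev2_eq_dotProduct (T : T02 m) (Y Z : VF m) (x : Pt m) :
    ev2 T Y Z x = Y x ⬝ᵥ (of (T x) *ᵥ Z x) := by
  simp only [ev2, dotProduct, mulVec, of_apply, Finset.mul_sum]
  exact Finset.sum_congr rfl fun i _ => Finset.sum_congr rfl fun j _ => by ring

lemma ev2_addV_left (T : T02 m) (Y Y' Z : VF m) :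
    ev2 T (addV Y Y') Z = fun y => ev2 T Y Z y + ev2 T Y' Z y := by
  funext y
  simp only [ev2_eq_dotProduct, addV_apply, add_dotProduct]

lemma ev2_addV_right (T : T02 m) (Y Z Z' : VF m) :
    ev2 T Y (addV Z Z') = fun y => ev2 T Y Z y + ev2 T Y Z' y := by
  funext y
  simp only [ev2_eq_dotProduct, addV_apply, mulVec_add, dotProduct_add]

lemma ev2_smulV_left (T : T02 m) (f : Pt m → ℝ) (Y Z : VF m) :
    ev2 T (smulV f Y) Z = fun y => f y * ev2 T Y Z y := by
  funext y
  simp only [ev2_eq_dotProduct, smulV_apply, smul_dotProduct, smul_eq_mul]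

lemma ev2_smulV_right (T : T02 m) (f : Pt m → ℝ) (Y Z : VF m) :
    ev2 T Y (smulV f Z) = fun y => f y * ev2 T Y Z y := by
  funext y
  simp only [ev2_eq_dotProduct, smulV_apply, mulVec_smul, dotProduct_smul, smul_eq_mul]

lemma ev2_comp1 (ψ φ : T02 m) (Y Z : VF m) (x : Pt m) :
    ev2 (comp1 ψ φ) Y Z x = ev2 ψ (appT φ Y) Z x := by
  have : of (comp1 ψ φ x) = (of (φ x))ᵀ * of (ψ x) := by
    ext i j
    simp only [comp1, of_apply, mul_apply, transpose_apply, mul_comm]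
  rw [ev2_eq_dotProduct, ev2_eq_dotProduct, this, ← mulVec_mulVec, dotProduct_mulVec,
    vecMul_transpose, appT_apply]

lemma ev2_comp2 (ψ φ : T02 m) (Y Z : VF m) (x : Pt m) :
    ev2 (comp2 ψ φ) Y Z x = ev2 ψ Y (appT φ Z) x := by
  have : of (comp2 ψ φ x) = of (ψ x) * of (φ x) := rfl
  rw [ev2_eq_dotProduct, ev2_eq_dotProduct, this, ← mulVec_mulVec, appT_apply]

lemma lie2_addV_field {V V' : VF m} (hV : DifferentiableAt ℝ V x)
    (hV' : DifferentiableAt ℝ V' x) (T : T02 m) (Y Z : VF m) :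
    lie2 (addV V V') T Y Z x = lie2 V T Y Z x + lie2 V' T Y Z x := by
  simp only [lie2, Xdot_addV, ev2_eq_dotProduct, lieB_addV_left hV hV', add_dotProduct,
    mulVec_add, dotProduct_add]
  ring

lemma lie2_smulV_field {f : Pt m → ℝ} {V : VF m} (hf : DifferentiableAt ℝ f x)
    (hV : DifferentiableAt ℝ V x) (T : T02 m) (Y Z : VF m) :
    lie2 (smulV f V) T Y Z x =
      f x * lie2 V T Y Z x + Xdot Y f x * ev2 T V Z x + Xdot Z f x * ev2 T Y V x := by
  simp only [lie2, Xdot_smulV, ev2_eq_dotProduct, lieB_smulV_left hf hV, sub_dotProduct,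
    smul_dotProduct, mulVec_sub, mulVec_smul, dotProduct_sub, dotProduct_smul, smul_eq_mul]
  ring

lemma lie2_addV_fst {T : T02 m} {Y Y' Z : VF m} (hT : DifferentiableAt ℝ T x)
    (hY : DifferentiableAt ℝ Y x) (hY' : DifferentiableAt ℝ Y' x)
    (hZ : DifferentiableAt ℝ Z x) (V : VF m) :
    lie2 V T (addV Y Y') Z x = lie2 V T Y Z x + lie2 V T Y' Z x := by
  simp only [lie2, ev2_addV_left T Y Y' Z,
    Xdot_add (differentiableAt_ev2 hT hY hZ) (differentiableAt_ev2 hT hY' hZ)]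
  simp only [ev2_eq_dotProduct, addV_apply, lieB_addV_right V hY hY', add_dotProduct]
  ring

lemma lie2_smulV_fst {f : Pt m → ℝ} {T : T02 m} {Y Z : VF m} (hf : DifferentiableAt ℝ f x)
    (hT : DifferentiableAt ℝ T x) (hY : DifferentiableAt ℝ Y x)
    (hZ : DifferentiableAt ℝ Z x) (V : VF m) :
    lie2 V T (smulV f Y) Z x = f x * lie2 V T Y Z x := by
  simp only [lie2, ev2_smulV_left T f Y Z, Xdot_mul hf (differentiableAt_ev2 hT hY hZ)]
  simp only [ev2_eq_dotProduct, smulV_apply, lieB_smulV_right V hf hY, add_dotProduct,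
    smul_dotProduct, smul_eq_mul]
  ring

lemma lie2_addV_snd {T : T02 m} {Y Z Z' : VF m} (hT : DifferentiableAt ℝ T x)
    (hY : DifferentiableAt ℝ Y x) (hZ : DifferentiableAt ℝ Z x)
    (hZ' : DifferentiableAt ℝ Z' x) (V : VF m) :
    lie2 V T Y (addV Z Z') x = lie2 V T Y Z x + lie2 V T Y Z' x := by
  simp only [lie2, ev2_addV_right T Y Z Z',
    Xdot_add (differentiableAt_ev2 hT hY hZ) (differentiableAt_ev2 hT hY hZ')]
  simp only [ev2_eq_dotProduct, addV_apply, lieB_addV_right V hZ hZ', mulVec_add,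
    dotProduct_add]
  ring

lemma lie2_smulV_snd {f : Pt m → ℝ} {T : T02 m} {Y Z : VF m} (hf : DifferentiableAt ℝ f x)
    (hT : DifferentiableAt ℝ T x) (hY : DifferentiableAt ℝ Y x)
    (hZ : DifferentiableAt ℝ Z x) (V : VF m) :
    lie2 V T Y (smulV f Z) x = f x * lie2 V T Y Z x := by
  simp only [lie2, ev2_smulV_right T f Y Z, Xdot_mul hf (differentiableAt_ev2 hT hY hZ)]
  simp only [ev2_eq_dotProduct, smulV_apply, lieB_smulV_right V hf hZ, mulVec_add,
    mulVec_smul, dotProduct_add, dotProduct_smul, smul_eq_mul]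
  ring

lemma Phi1_addV_left {φ ψ : T02 m} {X X' Y Z : VF m} (hφ : DifferentiableAt ℝ φ x)
    (hψ : DifferentiableAt ℝ ψ x) (hX : DifferentiableAt ℝ X x)
    (hX' : DifferentiableAt ℝ X' x) (hY : DifferentiableAt ℝ Y x) :
    Phi1 φ ψ (addV X X') Y Z x = Phi1 φ ψ X Y Z x + Phi1 φ ψ X' Y Z x := by
  have hψφ := differentiableAt_comp1 hψ hφ
  simp only [Phi1, appT_addV,
    lie2_addV_field (differentiableAt_appT hφ hX) (differentiableAt_appT hφ hX'),
    lie2_addV_field hX hX', lie2_addV_snd hψ hY hX hX', lie2_addV_snd hψφ hY hX hX']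
  simp only [ev2_eq_dotProduct, lieB_addV_left hX hX', mulVec_add, dotProduct_add]
  ring

lemma Phi1_smulV_left {f : Pt m → ℝ} {φ ψ : T02 m} {X Y Z : VF m}
    (hf : DifferentiableAt ℝ f x) (hφ : DifferentiableAt ℝ φ x)
    (hψ : DifferentiableAt ℝ ψ x) (hX : DifferentiableAt ℝ X x)
    (hY : DifferentiableAt ℝ Y x) :
    Phi1 φ ψ (smulV f X) Y Z x = f x * Phi1 φ ψ X Y Z x := by
  have hψφ := differentiableAt_comp1 hψ hφ
  simp only [Phi1, appT_smulV, lie2_smulV_field hf (differentiableAt_appT hφ hX),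
    lie2_smulV_field hf hX, lie2_smulV_snd hf hψ hY hX, lie2_smulV_snd hf hψφ hY hX]
  simp only [ev2_comp1, ev2_comp2]
  simp only [ev2_eq_dotProduct, appT_apply, lieB_smulV_left hf hX,
    mulVec_sub, mulVec_smul, dotProduct_sub, dotProduct_smul, smul_eq_mul]
  ring

lemma Phi1_addV_mid {φ ψ : T02 m} {X Y Y' Z : VF m} (hφ : DifferentiableAt ℝ φ x)
    (hψ : DifferentiableAt ℝ ψ x) (hX : DifferentiableAt ℝ X x)
    (hY : DifferentiableAt ℝ Y x) (hY' : DifferentiableAt ℝ Y' x)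
    (hZ : DifferentiableAt ℝ Z x) :
    Phi1 φ ψ X (addV Y Y') Z x = Phi1 φ ψ X Y Z x + Phi1 φ ψ X Y' Z x := by
  have hψφ := differentiableAt_comp1 hψ hφ
  simp only [Phi1, lie2_addV_fst hψ hY hY' hZ, lie2_addV_fst hψφ hY hY' hZ,
    lie2_addV_fst hψ hY hY' hX, lie2_addV_fst hψφ hY hY' hX]
  simp only [ev2_eq_dotProduct, addV_apply, add_dotProduct]
  ring

lemma Phi1_smulV_mid {f : Pt m → ℝ} {φ ψ : T02 m} {X Y Z : VF m}
    (hf : DifferentiableAt ℝ f x) (hφ : DifferentiableAt ℝ φ x)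
    (hψ : DifferentiableAt ℝ ψ x) (hX : DifferentiableAt ℝ X x)
    (hY : DifferentiableAt ℝ Y x) (hZ : DifferentiableAt ℝ Z x) :
    Phi1 φ ψ X (smulV f Y) Z x = f x * Phi1 φ ψ X Y Z x := by
  have hψφ := differentiableAt_comp1 hψ hφ
  simp only [Phi1, lie2_smulV_fst hf hψ hY hZ, lie2_smulV_fst hf hψφ hY hZ,
    lie2_smulV_fst hf hψ hY hX, lie2_smulV_fst hf hψφ hY hX]
  simp only [ev2_eq_dotProduct, smulV_apply, smul_dotProduct, smul_eq_mul]
  ring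

lemma Phi1_addV_right {φ ψ : T02 m} {X Y Z Z' : VF m} (hφ : DifferentiableAt ℝ φ x)
    (hψ : DifferentiableAt ℝ ψ x) (hY : DifferentiableAt ℝ Y x)
    (hZ : DifferentiableAt ℝ Z x) (hZ' : DifferentiableAt ℝ Z' x) :
    Phi1 φ ψ X Y (addV Z Z') x = Phi1 φ ψ X Y Z x + Phi1 φ ψ X Y Z' x := by
  have hψφ := differentiableAt_comp1 hψ hφ
  simp only [Phi1, appT_addV,
    lie2_addV_field (differentiableAt_appT hφ hZ) (differentiableAt_appT hφ hZ'),
    lie2_addV_field hZ hZ', lie2_addV_snd hψ hY hZ hZ', lie2_addV_snd hψφ hY hZ hZ']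
  simp only [ev2_eq_dotProduct, lieB_addV_right X hZ hZ', mulVec_add, dotProduct_add]
  ring

lemma Phi1_smulV_right {f : Pt m → ℝ} {φ ψ : T02 m} {X Y Z : VF m}
    (hf : DifferentiableAt ℝ f x) (hφ : DifferentiableAt ℝ φ x)
    (hψ : DifferentiableAt ℝ ψ x) (hY : DifferentiableAt ℝ Y x)
    (hZ : DifferentiableAt ℝ Z x) :
    Phi1 φ ψ X Y (smulV f Z) x = f x * Phi1 φ ψ X Y Z x := by
  have hψφ := differentiableAt_comp1 hψ hφ
  simp only [Phi1, appT_smulV, lie2_smulV_field hf (differentiableAt_appT hφ hZ),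
    lie2_smulV_field hf hZ, lie2_smulV_snd hf hψ hY hZ, lie2_smulV_snd hf hψφ hY hZ]
  simp only [ev2_comp1, ev2_comp2]
  simp only [ev2_eq_dotProduct, appT_apply, lieB_smulV_right X hf hZ,
    mulVec_add, mulVec_smul, dotProduct_add, dotProduct_smul, smul_eq_mul]
  ring

end

/-- Theorem 3.4, first operator: `Φ₁(φ,ψ)` is a (0,3)-tensor field, i.e. it is
`C^∞(M)`-linear in each of its arguments `X, Y, Z`. -/
theorem stmt12 (m : ℕ) (φ ψ : T02 m)
    (hφ : ContDiff ℝ (⊤ : ℕ∞) φ) (hψ : ContDiff ℝ (⊤ : ℕ∞) ψ) :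
    ∀ (f : Pt m → ℝ), ContDiff ℝ (⊤ : ℕ∞) f →
    ∀ (X X' Y Z : VF m), ContDiff ℝ (⊤ : ℕ∞) X → ContDiff ℝ (⊤ : ℕ∞) X' →
      ContDiff ℝ (⊤ : ℕ∞) Y → ContDiff ℝ (⊤ : ℕ∞) Z →
    ∀ x : Pt m,
      (Phi1 φ ψ (addV X X') Y Z x = Phi1 φ ψ X Y Z x + Phi1 φ ψ X' Y Z x) ∧
      (Phi1 φ ψ (smulV f X) Y Z x = f x * Phi1 φ ψ X Y Z x) ∧
      (Phi1 φ ψ X (addV Y X') Z x = Phi1 φ ψ X Y Z x + Phi1 φ ψ X X' Z x) ∧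
      (Phi1 φ ψ X (smulV f Y) Z x = f x * Phi1 φ ψ X Y Z x) ∧
      (Phi1 φ ψ X Y (addV Z X') x = Phi1 φ ψ X Y Z x + Phi1 φ ψ X Y X' x) ∧
      (Phi1 φ ψ X Y (smulV f Z) x = f x * Phi1 φ ψ X Y Z x) := by
  intro f hf X X' Y Z hX hX' hY hZ x
  have dφ := (hφ.differentiable (by simp)).differentiableAt (x := x)
  have dψ := (hψ.differentiable (by simp)).differentiableAt (x := x)
  have df := (hf.differentiable (by simp)).differentiableAt (x := x)
  have dX := (hX.differentiable (by simp)).differentiableAt (x := x)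
  have dX' := (hX'.differentiable (by simp)).differentiableAt (x := x)
  have dY := (hY.differentiable (by simp)).differentiableAt (x := x)
  have dZ := (hZ.differentiable (by simp)).differentiableAt (x := x)
  exact ⟨Phi1_addV_left dφ dψ dX dX' dY, Phi1_smulV_left df dφ dψ dX dY,
    Phi1_addV_mid dφ dψ dX dY dX' dZ, Phi1_smulV_mid df dφ dψ dX dY dZ,
    Phi1_addV_right dφ dψ dY dZ dX', Phi1_smulV_right df dφ dψ dY dZ⟩
end
end
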